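/- arXiv:0710.4784 — 3 statements merged into one kernel-verified Lean document; each statement's English description precedes it below -/
import Mathlib

section
/- Every fourth-order ODE obtained from a linear equation by a point transformation is linear in the third-order derivative. Precisely: let φ, ψ be smooth on an open set U ⊆ ℝ² with nonvanishing Jacobian Δ = φ_x·ψ_y − φ_y·ψ_x, and let α, β be smooth real functions. Then there exist functions g1(x, y, p, q) and g0(x, y, p, q), determined by φ, ψ, α, β, such that every four-times continuously differentiable function y(x) with graph in U and s(x) = φ_x + y'(x)·φ_y ≠ 0, whose image function u (defined by u(φ(x,y(x))) = ψ(x,y(x)) as a function of t = φ(x,y(x))) satisfies u'''' + α(t)·u' + β(t)·u = 0, satisfies the equation y''''(x) = g1(x, y(x), y'(x), y''(x))·y'''(x) + g0(x, y(x), y'(x), y''(x)). -/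
open Set

/-- Partial derivative with respect to the first variable. -/
noncomputable def px (f : ℝ → ℝ → ℝ) : ℝ → ℝ → ℝ := fun x y => deriv (fun s => f s y) x

/-- Partial derivative with respect to the second variable. -/
noncomputable def py (f : ℝ → ℝ → ℝ) : ℝ → ℝ → ℝ := fun x y => deriv (fun s => f x s) y

/-- Smoothness of a function of two real variables on a set. -/
def Smooth2On (f : ℝ → ℝ → ℝ) (U : Set (ℝ × ℝ)) : Prop :=
  ContDiffOn ℝ (⊤ : ℕ∞) (fun p : ℝ × ℝ => f p.1 p.2) U

/-- The Jacobian `Δ = φ_x ψ_y − φ_y ψ_x` of a point transformation. -/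
noncomputable def Jac (φ ψ : ℝ → ℝ → ℝ) : ℝ → ℝ → ℝ :=
  fun x y => px φ x y * py ψ x y - py φ x y * px ψ x y

/-!
Along a curve `y`, the `k`-th derivative of `ξ ↦ f ξ (y ξ)` is a universal polynomial
(`totalDeriv`) in the partial derivatives of `f` and the `k`-jet of `y`; for `k ≥ 1` it is affine
in `y⁽ᵏ⁾` with slope `f_y`. Differentiating `u (φ ξ (y ξ)) = ψ ξ (y ξ)` four times and expanding
the left side by Faà di Bruno gives four relations between `u', …, u''''` at `t = φ x (y x)` and
these polynomials. As `s ≠ 0`, the first three determine `u', u'', u'''`, and the Laguerre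
equation determines `u''''`. In the fourth relation `y''''` then occurs only with the coefficient
`ψ_y - u' φ_y = Δ / s ≠ 0`, so it can be solved for `y''''`; the solution is affine in `y'''`
because the total derivatives of order 3 and 4 are.
-/

open Function Finset

section PartialDerivatives

variable {f : ℝ → ℝ → ℝ} {x y : ℝ}

lemma px_eq_fderiv (hf : DifferentiableAt ℝ (uncurry f) (x, y)) :
    px f x y = fderiv ℝ (uncurry f) (x, y) (1, 0) := by
  exact (hf.hasFDerivAt.comp_hasDerivAt x
    ((hasDerivAt_id' x).prodMk (hasDerivAt_const x y))).deriv

lemma py_eq_fderiv (hf : DifferentiableAt ℝ (uncurry f) (x, y)) :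
    py f x y = fderiv ℝ (uncurry f) (x, y) (0, 1) := by
  exact (hf.hasFDerivAt.comp_hasDerivAt y
    ((hasDerivAt_const y x).prodMk (hasDerivAt_id' y))).deriv

lemma hasDerivAt_comp_graph {y : ℝ → ℝ} {p : ℝ}
    (hf : DifferentiableAt ℝ (uncurry f) (x, y x)) (hy : HasDerivAt y p x) :
    HasDerivAt (fun ξ => f ξ (y ξ)) (px f x (y x) + p * py f x (y x)) x := by
  have h := hf.hasFDerivAt.comp_hasDerivAt x ((hasDerivAt_id x).prodMk hy)
  have hsplit : ((1 : ℝ), p) = ((1 : ℝ), (0 : ℝ)) + p • ((0 : ℝ), (1 : ℝ)) := by simp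
  rwa [hsplit, map_add, map_smul, ← px_eq_fderiv hf, ← py_eq_fderiv hf, smul_eq_mul] at h

variable {U : Set (ℝ × ℝ)} {n : WithTop ℕ∞}

lemma ContDiffOn.px (hU : IsOpen U) (hf : ContDiffOn ℝ (n + 1) (uncurry f) U) :
    ContDiffOn ℝ n (uncurry (px f)) U := by
  refine ((ContinuousLinearMap.apply ℝ ℝ ((1 : ℝ), (0 : ℝ))).contDiff.comp_contDiffOn
    (hf.fderiv_of_isOpen hU le_rfl)).congr fun q hq => ?_
  exact px_eq_fderiv ((hf.contDiffAt (hU.mem_nhds hq)).differentiableAt (by simp))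

lemma ContDiffOn.py (hU : IsOpen U) (hf : ContDiffOn ℝ (n + 1) (uncurry f) U) :
    ContDiffOn ℝ n (uncurry (py f)) U := by
  refine ((ContinuousLinearMap.apply ℝ ℝ ((0 : ℝ), (1 : ℝ))).contDiff.comp_contDiffOn
    (hf.fderiv_of_isOpen hU le_rfl)).congr fun q hq => ?_
  exact py_eq_fderiv ((hf.contDiffAt (hU.mem_nhds hq)).differentiableAt (by simp))

lemma ContDiffOn.comp_graph {y : ℝ → ℝ} {I : Set ℝ} (hf : ContDiffOn ℝ n (uncurry f) U)
    (hy : ContDiffOn ℝ n y I) (hgraph : MapsTo (fun ξ => (ξ, y ξ)) I U) :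
    ContDiffOn ℝ n (fun ξ => f ξ (y ξ)) I :=
  hf.comp (contDiffOn_id.prodMk hy) hgraph

end PartialDerivatives

/-- The recursion is the Leibniz rule applied to
`(f ∘ graph y)' = f_x ∘ graph y + y' · (f_y ∘ graph y)`, with `c j` standing for `y⁽ʲ⁾`. -/
noncomputable def totalDeriv : ℕ → (ℝ → ℝ → ℝ) → ℝ → (ℕ → ℝ) → ℝ
  | 0, f, x, c => f x (c 0)
  | k + 1, f, x, c => totalDeriv k (px f) x c +
      ∑ j ∈ range (k + 1), (k.choose j : ℝ) * c (j + 1) * totalDeriv (k - j) (py f) x c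

section TotalDerivative

variable {f : ℝ → ℝ → ℝ} {x : ℝ} {c c' : ℕ → ℝ}

@[simp]
lemma totalDeriv_zero : totalDeriv 0 f x c = f x (c 0) := by
  rw [totalDeriv]

lemma totalDeriv_one : totalDeriv 1 f x c = px f x (c 0) + c 1 * py f x (c 0) := by
  simp [totalDeriv]

lemma totalDeriv_congr {k : ℕ} (h : ∀ j ≤ k, c j = c' j) :
    totalDeriv k f x c = totalDeriv k f x c' := by
  induction k using Nat.strong_induction_on generalizing f with
  | _ k ih =>
  cases k with
  | zero => simp [h 0 le_rfl]
  | succ k =>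
    rw [totalDeriv, totalDeriv, ih k (lt_add_one k) fun j hj => h j (by omega)]
    refine congrArg _ (sum_congr rfl fun j hj => ?_)
    rw [Finset.mem_range] at hj
    rw [h (j + 1) (by omega), ih (k - j) (by omega) fun i hi => h i (by omega)]

lemma totalDeriv_succ_eq_add {k : ℕ} (h : ∀ j ≤ k, c j = c' j) (h' : c' (k + 1) = 0) :
    totalDeriv (k + 1) f x c = totalDeriv (k + 1) f x c' + c (k + 1) * py f x (c 0) := by
  have hc : ∀ m ≤ k, ∀ g, totalDeriv m g x c = totalDeriv m g x c' :=
    fun m hm g => totalDeriv_congr fun j hj => h j (hj.trans hm)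
  rw [totalDeriv, totalDeriv, sum_range_succ, sum_range_succ, hc k le_rfl]
  rw [sum_congr rfl fun j hj => by rw [h (j + 1) (by rw [Finset.mem_range] at hj; omega),
    hc (k - j) (Nat.sub_le k j)]]
  simp [h']
  ring

end TotalDerivative

theorem iteratedDeriv_comp_graph {k : ℕ} {f : ℝ → ℝ → ℝ} {U : Set (ℝ × ℝ)} {y : ℝ → ℝ}
    {I : Set ℝ} (hU : IsOpen U) (hI : IsOpen I) (hf : ContDiffOn ℝ k (uncurry f) U)
    (hy : ContDiffOn ℝ k y I) (hgraph : MapsTo (fun ξ => (ξ, y ξ)) I U) :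
    EqOn (iteratedDeriv k fun ξ => f ξ (y ξ))
      (fun ξ => totalDeriv k f ξ fun j => iteratedDeriv j y ξ) I := by
  induction k using Nat.strong_induction_on generalizing f with
  | _ k ih =>
  cases k with
  | zero => intro ξ _; simp
  | succ k =>
    intro ξ hξ
    have hf' : ContDiffOn ℝ (k + 1) (uncurry f) U := by exact_mod_cast hf
    have hy' : ContDiffOn ℝ (k + 1) y I := by exact_mod_cast hy
    have hyk : ContDiffOn ℝ k y I := hy'.of_le (by simp)
    have hdy : ContDiffOn ℝ k (deriv y) I := hy'.deriv_of_isOpen hI le_rfl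
    have hpx : ContDiffOn ℝ k (fun ξ => px f ξ (y ξ)) I := (hf'.px hU).comp_graph hyk hgraph
    have hpy : ContDiffOn ℝ k (fun ξ => py f ξ (y ξ)) I := (hf'.py hU).comp_graph hyk hgraph
    have hderiv : EqOn (deriv fun ξ => f ξ (y ξ))
        (fun ξ => px f ξ (y ξ) + deriv y ξ * py f ξ (y ξ)) I := fun ξ hξ =>
      (hasDerivAt_comp_graph ((hf.contDiffAt (hU.mem_nhds (hgraph hξ))).differentiableAt
        (by simp)) ((hy.contDiffAt (hI.mem_nhds hξ)).differentiableAt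
        (by simp)).hasDerivAt).deriv
    have hAt {g : ℝ → ℝ} (hg : ContDiffOn ℝ k g I) : ContDiffAt ℝ k g ξ :=
      hg.contDiffAt (hI.mem_nhds hξ)
    dsimp only
    rw [iteratedDeriv_succ', hderiv.iteratedDeriv_of_isOpen hI k hξ,
      iteratedDeriv_fun_add (hAt hpx) (hAt (hdy.mul hpy)),
      iteratedDeriv_fun_mul (hAt hdy) (hAt hpy),
      ih k (lt_add_one k) (hf'.px hU) hyk hξ, totalDeriv]
    congr 1
    refine sum_congr rfl fun j _ => ?_
    have hjk : ((k - j : ℕ) : WithTop ℕ∞) ≤ k := by exact_mod_cast Nat.sub_le k j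
    rw [← iteratedDeriv_succ', ih (k - j) (by omega) ((hf'.py hU).of_le hjk) (hyk.of_le hjk) hξ]

lemma px_fun_snd (g : ℝ → ℝ) : px (fun _ τ => g τ) = fun _ _ => 0 := by
  ext x τ; simp [px]

lemma py_fun_snd (g : ℝ → ℝ) : py (fun _ τ => g τ) = fun _ τ => deriv g τ := rfl

section FaaDiBruno

variable (u : ℝ → ℝ) (x : ℝ) (c : ℕ → ℝ)

lemma totalDeriv_one_fun_snd : totalDeriv 1 (fun _ τ => u τ) x c = deriv u (c 0) * c 1 := by
  simp [totalDeriv, px_fun_snd, py_fun_snd, mul_comm]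

lemma totalDeriv_two_fun_snd :
    totalDeriv 2 (fun _ τ => u τ) x c
      = iteratedDeriv 2 u (c 0) * c 1 ^ 2 + deriv u (c 0) * c 2 := by
  simp [totalDeriv, sum_range_succ, px_fun_snd, py_fun_snd, iteratedDeriv_succ]
  ring

lemma totalDeriv_three_fun_snd :
    totalDeriv 3 (fun _ τ => u τ) x c = iteratedDeriv 3 u (c 0) * c 1 ^ 3
      + 3 * iteratedDeriv 2 u (c 0) * c 1 * c 2 + deriv u (c 0) * c 3 := by
  simp [totalDeriv, sum_range_succ, px_fun_snd, py_fun_snd, iteratedDeriv_succ, Nat.choose]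
  ring

lemma totalDeriv_four_fun_snd :
    totalDeriv 4 (fun _ τ => u τ) x c = iteratedDeriv 4 u (c 0) * c 1 ^ 4
      + 6 * iteratedDeriv 3 u (c 0) * c 1 ^ 2 * c 2 + 3 * iteratedDeriv 2 u (c 0) * c 2 ^ 2
      + 4 * iteratedDeriv 2 u (c 0) * c 1 * c 3 + deriv u (c 0) * c 4 := by
  simp [totalDeriv, sum_range_succ, px_fun_snd, py_fun_snd, iteratedDeriv_succ, Nat.choose]
  ring

end FaaDiBruno

theorem totalDeriv_comp_eq_of_eqOn {k : ℕ} {f g : ℝ → ℝ → ℝ} {u y : ℝ → ℝ}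
    {U : Set (ℝ × ℝ)} {I W : Set ℝ} {x : ℝ} (hU : IsOpen U) (hI : IsOpen I) (hW : IsOpen W)
    (hf : ContDiffOn ℝ k (uncurry f) U) (hg : ContDiffOn ℝ k (uncurry g) U)
    (hu : ContDiffOn ℝ k u W) (hy : ContDiffOn ℝ k y I)
    (hgraph : MapsTo (fun ξ => (ξ, y ξ)) I U) (hfW : MapsTo (fun ξ => f ξ (y ξ)) I W)
    (h : EqOn (fun ξ => u (f ξ (y ξ))) (fun ξ => g ξ (y ξ)) I) (hx : x ∈ I) :
    totalDeriv k (fun _ τ => u τ) x (fun j => totalDeriv j f x fun i => iteratedDeriv i y x)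
      = totalDeriv k g x fun i => iteratedDeriv i y x := by
  have hu' : ContDiffOn ℝ k (uncurry fun (_ : ℝ) τ => u τ) (univ ×ˢ W) :=
    hu.comp contDiff_snd.contDiffOn fun q hq => hq.2
  have hcomp : iteratedDeriv k (fun ξ => u (f ξ (y ξ))) x
      = totalDeriv k (fun _ τ => u τ) x fun j => iteratedDeriv j (fun ξ => f ξ (y ξ)) x :=
    iteratedDeriv_comp_graph (isOpen_univ.prod hW) hI hu' (hf.comp_graph hy hgraph)
      (fun ξ hξ => ⟨trivial, hfW hξ⟩) hx
  have hg' : iteratedDeriv k (fun ξ => g ξ (y ξ)) x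
      = totalDeriv k g x fun i => iteratedDeriv i y x :=
    iteratedDeriv_comp_graph hU hI hg hy hgraph hx
  rw [← hg', ← h.iteratedDeriv_of_isOpen hI k hx, hcomp]
  exact totalDeriv_congr fun j hj => (iteratedDeriv_comp_graph hU hI
    (hf.of_le (by exact_mod_cast hj)) (hy.of_le (by exact_mod_cast hj)) hgraph hx).symm

/-- `u₁, …, u₄` are `u', …, u''''` at `t`, solved from the first three Faà di Bruno relations
(`T`, `Ψ` being the jets of `t` and of `ψ (x, y)`) and from the Laguerre equation; the value is
the solution `y''''` of the fourth relation (`eq_fourthDerivOfJets`). -/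
noncomputable def fourthDerivOfJets (a b : ℝ) (T Ψ : ℕ → ℝ) (φy ψy : ℝ) : ℝ :=
  let u₁ := Ψ 1 / T 1
  let u₂ := (Ψ 2 - u₁ * T 2) / T 1 ^ 2
  let u₃ := (Ψ 3 - 3 * u₂ * T 1 * T 2 - u₁ * T 3) / T 1 ^ 3
  let u₄ := -(a * u₁ + b * Ψ 0)
  T 1 / (T 1 * ψy - Ψ 1 * φy)
    * (u₄ * T 1 ^ 4 + 6 * u₃ * T 1 ^ 2 * T 2 + 3 * u₂ * T 2 ^ 2 + 4 * u₂ * T 1 * T 3 + u₁ * T 4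
      - Ψ 4)

lemma eq_fourthDerivOfJets {a b φy ψy w u₁ u₂ u₃ u₄ : ℝ} {T Ψ : ℕ → ℝ} (hT : T 1 ≠ 0)
    (hJ : T 1 * ψy - Ψ 1 * φy ≠ 0) (e₁ : u₁ * T 1 = Ψ 1)
    (e₂ : u₂ * T 1 ^ 2 + u₁ * T 2 = Ψ 2)
    (e₃ : u₃ * T 1 ^ 3 + 3 * u₂ * T 1 * T 2 + u₁ * T 3 = Ψ 3)
    (e₄ : u₄ * T 1 ^ 4 + 6 * u₃ * T 1 ^ 2 * T 2 + 3 * u₂ * T 2 ^ 2 + 4 * u₂ * T 1 * T 3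
      + u₁ * (T 4 + w * φy) = Ψ 4 + w * ψy)
    (hode : u₄ + a * u₁ + b * Ψ 0 = 0) :
    w = fourthDerivOfJets a b T Ψ φy ψy := by
  have h₁ : u₁ = Ψ 1 / T 1 := eq_div_of_mul_eq hT e₁
  have h₂ : u₂ = (Ψ 2 - u₁ * T 2) / T 1 ^ 2 :=
    eq_div_of_mul_eq (pow_ne_zero 2 hT) (by linear_combination e₂)
  have h₃ : u₃ = (Ψ 3 - 3 * u₂ * T 1 * T 2 - u₁ * T 3) / T 1 ^ 3 :=
    eq_div_of_mul_eq (pow_ne_zero 3 hT) (by linear_combination e₃)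
  have h₄ : u₄ = -(a * u₁ + b * Ψ 0) := by linear_combination hode
  have hw : w = T 1 / (T 1 * ψy - Ψ 1 * φy) * (u₄ * T 1 ^ 4 + 6 * u₃ * T 1 ^ 2 * T 2
      + 3 * u₂ * T 2 ^ 2 + 4 * u₂ * T 1 * T 3 + u₁ * T 4 - Ψ 4) := by
    rw [div_mul_eq_mul_div, eq_div_iff hJ]
    linear_combination (-T 1) * e₄ + (w * φy) * e₁
  rw [hw, h₄, h₃, h₂, h₁]
  rfl

def jet (a p q r : ℝ) : ℕ → ℝ
  | 0 => a
  | 1 => p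
  | 2 => q
  | 3 => r
  | _ => 0

/-- The jets of `φ` and `ψ` are taken with `y'''' = 0`: `y''''` only enters through `φ_y`, `ψ_y`,
and `fourthDerivOfJets` solves for it. -/
noncomputable def imageFourthDeriv (φ ψ : ℝ → ℝ → ℝ) (α β : ℝ → ℝ) (x a p q r : ℝ) : ℝ :=
  fourthDerivOfJets (α (φ x a)) (β (φ x a)) (fun k => totalDeriv k φ x (jet a p q r))
    (fun k => totalDeriv k ψ x (jet a p q r)) (py φ x a) (py ψ x a)

section Jet

variable (f : ℝ → ℝ → ℝ) (x a p q r : ℝ)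

lemma totalDeriv_jet_of_le_two {k : ℕ} (hk : k ≤ 2) :
    totalDeriv k f x (jet a p q r) = totalDeriv k f x (jet a p q 0) :=
  totalDeriv_congr fun j hj => by
    have : j ≤ 2 := hj.trans hk
    interval_cases j <;> rfl

lemma totalDeriv_three_jet :
    totalDeriv 3 f x (jet a p q r) = totalDeriv 3 f x (jet a p q 0) + r * py f x a :=
  totalDeriv_succ_eq_add (fun j hj => by interval_cases j <;> rfl) rfl

lemma totalDeriv_four_jet :
    totalDeriv 4 f x (jet a p q r) = totalDeriv 4 f x (jet a p q 0)
      + r * (py (px f) x a + 3 * px (py f) x a + 4 * p * py (py f) x a) := by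
  simp [totalDeriv, jet, sum_range_succ, Nat.choose]
  ring

end Jet

lemma imageFourthDeriv_affine (φ ψ : ℝ → ℝ → ℝ) (α β : ℝ → ℝ) (x a p q r : ℝ) :
    imageFourthDeriv φ ψ α β x a p q r
      = (imageFourthDeriv φ ψ α β x a p q 1 - imageFourthDeriv φ ψ α β x a p q 0) * r
        + imageFourthDeriv φ ψ α β x a p q 0 := by
  have hlow (s : ℝ) (f : ℝ → ℝ → ℝ) (k : ℕ) (hk : k ≤ 2) :=
    totalDeriv_jet_of_le_two f x a p q s hk
  have h₃ (s : ℝ) (f : ℝ → ℝ → ℝ) := totalDeriv_three_jet f x a p q s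
  have h₄ (s : ℝ) (f : ℝ → ℝ → ℝ) := totalDeriv_four_jet f x a p q s
  simp (disch := norm_num) only [imageFourthDeriv, fourthDerivOfJets, hlow r, hlow 1, h₃ r,
    h₃ 1, h₄ r, h₄ 1]
  ring

theorem iteratedDeriv_four_eq_imageFourthDeriv {φ ψ : ℝ → ℝ → ℝ} {α β y u : ℝ → ℝ}
    {U : Set (ℝ × ℝ)} {I W : Set ℝ} {x : ℝ} (hU : IsOpen U) (hI : IsOpen I) (hW : IsOpen W)
    (hφ : ContDiffOn ℝ 4 (uncurry φ) U) (hψ : ContDiffOn ℝ 4 (uncurry ψ) U)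
    (hu : ContDiffOn ℝ 4 u W) (hy : ContDiffOn ℝ 4 y I)
    (hgraph : MapsTo (fun ξ => (ξ, y ξ)) I U) (hφW : MapsTo (fun ξ => φ ξ (y ξ)) I W)
    (himg : EqOn (fun ξ => u (φ ξ (y ξ))) (fun ξ => ψ ξ (y ξ)) I) (hx : x ∈ I)
    (hs : px φ x (y x) + deriv y x * py φ x (y x) ≠ 0) (hJ : Jac φ ψ x (y x) ≠ 0)
    (hode : iteratedDeriv 4 u (φ x (y x)) + α (φ x (y x)) * deriv u (φ x (y x))
      + β (φ x (y x)) * u (φ x (y x)) = 0) :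
    iteratedDeriv 4 y x = imageFourthDeriv φ ψ α β x (y x) (deriv y x) (iteratedDeriv 2 y x)
      (iteratedDeriv 3 y x) := by
  have hdiff (k : ℕ) (hk : k ≤ 4) := totalDeriv_comp_eq_of_eqOn hU hI hW
    (hφ.of_le (by exact_mod_cast hk)) (hψ.of_le (by exact_mod_cast hk))
    (hu.of_le (by exact_mod_cast hk)) (hy.of_le (by exact_mod_cast hk)) hgraph hφW himg hx
  set C : ℕ → ℝ := fun i => iteratedDeriv i y x
  set c := jet (y x) (deriv y x) (iteratedDeriv 2 y x) (iteratedDeriv 3 y x)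
  have hCc : ∀ j ≤ 3, C j = c j := fun j hj => by interval_cases j <;> simp [C, c, jet]
  have hlow (f : ℝ → ℝ → ℝ) (k : ℕ) (hk : k ≤ 3) : totalDeriv k f x C = totalDeriv k f x c :=
    totalDeriv_congr fun j hj => hCc j (hj.trans hk)
  have hfour (f : ℝ → ℝ → ℝ) :
      totalDeriv 4 f x C = totalDeriv 4 f x c + iteratedDeriv 4 y x * py f x (y x) := by
    simpa [C] using totalDeriv_succ_eq_add (f := f) (x := x) hCc rfl
  have e₁ := hdiff 1 (by norm_num)
  have e₂ := hdiff 2 (by norm_num)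
  have e₃ := hdiff 3 (by norm_num)
  have e₄ := hdiff 4 le_rfl
  simp (disch := norm_num) only [totalDeriv_one_fun_snd, totalDeriv_two_fun_snd,
    totalDeriv_three_fun_snd, totalDeriv_four_fun_snd, hfour, hlow, totalDeriv_zero]
    at e₁ e₂ e₃ e₄
  have hc₀ : c 0 = y x := rfl
  have hc₁ : c 1 = deriv y x := rfl
  rw [hc₀] at e₁ e₂ e₃ e₄
  have hΨ₀ : totalDeriv 0 ψ x c = u (φ x (y x)) := totalDeriv_zero.trans (himg hx).symm
  refine eq_fourthDerivOfJets (T := fun k => totalDeriv k φ x c)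
    (Ψ := fun k => totalDeriv k ψ x c) ?_ ?_ e₁ e₂ e₃ e₄ (by rwa [hΨ₀])
  · simpa only [totalDeriv_one, hc₀, hc₁] using hs
  · convert hJ using 1
    simp only [totalDeriv_one, hc₀, hc₁, Jac]
    ring

theorem image_equation_linear_in_third_derivative_general
    (U : Set (ℝ × ℝ)) (hU : IsOpen U)
    (φ ψ : ℝ → ℝ → ℝ) (hφ : Smooth2On φ U) (hψ : Smooth2On ψ U)
    (hΔ : ∀ x y, (x, y) ∈ U → Jac φ ψ x y ≠ 0)
    (α β : ℝ → ℝ) :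
    ∃ g1 g0 : ℝ → ℝ → ℝ → ℝ → ℝ,
      ∀ (y : ℝ → ℝ) (I : Set ℝ), IsOpen I → I.OrdConnected →
        (∀ x ∈ I, (x, y x) ∈ U) → ContDiffOn ℝ 4 y I →
        (∀ x ∈ I, px φ x (y x) + deriv y x * py φ x (y x) ≠ 0) →
        ∀ (u : ℝ → ℝ) (W : Set ℝ), IsOpen W → (∀ x ∈ I, φ x (y x) ∈ W) →
          ContDiffOn ℝ 4 u W →
          (∀ x ∈ I, u (φ x (y x)) = ψ x (y x)) →
          (∀ x ∈ I, iteratedDeriv 4 u (φ x (y x))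
            + α (φ x (y x)) * deriv u (φ x (y x))
            + β (φ x (y x)) * u (φ x (y x)) = 0) →
          ∀ x ∈ I, iteratedDeriv 4 y x
            = g1 x (y x) (deriv y x) (iteratedDeriv 2 y x) * iteratedDeriv 3 y x
              + g0 x (y x) (deriv y x) (iteratedDeriv 2 y x) := by
  refine ⟨fun x a p q =>
      imageFourthDeriv φ ψ α β x a p q 1 - imageFourthDeriv φ ψ α β x a p q 0,
    fun x a p q => imageFourthDeriv φ ψ α β x a p q 0, ?_⟩
  intro y I hI _ hgraph hy hs u W hW hφW hu himg hode x hx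
  have hsmooth : (4 : WithTop ℕ∞) ≤ (⊤ : ℕ∞) := WithTop.coe_le_coe.2 le_top
  rw [iteratedDeriv_four_eq_imageFourthDeriv hU hI hW (hφ.of_le hsmooth) (hψ.of_le hsmooth) hu
    hy (fun ξ hξ => hgraph ξ hξ) (fun ξ hξ => hφW ξ hξ) (fun ξ hξ => himg ξ hξ) hx (hs x hx)
    (hΔ x (y x) (hgraph x hx)) (hode x hx)]
  exact imageFourthDeriv_affine φ ψ α β x _ _ _ _

/-- every fourth-order ODE obtained from a linear equation in Laguerre form
by a point transformation is linear in the third-order derivative: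
`y'''' = g1(x, y, y', y'')·y''' + g0(x, y, y', y'')`. -/
theorem image_equation_linear_in_third_derivative
    (U : Set (ℝ × ℝ)) (hU : IsOpen U)
    (φ ψ : ℝ → ℝ → ℝ) (hφ : Smooth2On φ U) (hψ : Smooth2On ψ U)
    (hΔ : ∀ x y, (x, y) ∈ U → Jac φ ψ x y ≠ 0)
    (α β : ℝ → ℝ)
    (hα : ContDiffOn ℝ (⊤ : ℕ∞) α ((fun p : ℝ × ℝ => φ p.1 p.2) '' U))
    (hβ : ContDiffOn ℝ (⊤ : ℕ∞) β ((fun p : ℝ × ℝ => φ p.1 p.2) '' U)) :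
    ∃ g1 g0 : ℝ → ℝ → ℝ → ℝ → ℝ,
      ∀ (y : ℝ → ℝ) (I : Set ℝ), IsOpen I → I.OrdConnected →
        (∀ x ∈ I, (x, y x) ∈ U) → ContDiffOn ℝ 4 y I →
        (∀ x ∈ I, px φ x (y x) + deriv y x * py φ x (y x) ≠ 0) →
        ∀ (u : ℝ → ℝ) (W : Set ℝ), IsOpen W → (∀ x ∈ I, φ x (y x) ∈ W) →
          ContDiffOn ℝ 4 u W →
          (∀ x ∈ I, u (φ x (y x)) = ψ x (y x)) →
          (∀ x ∈ I, iteratedDeriv 4 u (φ x (y x))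
            + α (φ x (y x)) * deriv u (φ x (y x))
            + β (φ x (y x)) * u (φ x (y x)) = 0) →
          ∀ x ∈ I, iteratedDeriv 4 y x
            = g1 x (y x) (deriv y x) (iteratedDeriv 2 y x) * iteratedDeriv 3 y x
              + g0 x (y x) (deriv y x) (iteratedDeriv 2 y x) :=
  image_equation_linear_in_third_derivative_general U hU φ ψ hφ hψ hΔ α β
end

section
/- Let φ, ψ be smooth on an open set U ⊆ ℝ² with Jacobian Δ = φ_x·ψ_y − φ_y·ψ_x. Then there exist functions S(x,y,p), a(x,y,p), b(x,y,p), c(x,y,p), determined by φ and ψ, and a function Q(x,y,p,q) that is a polynomial of degree at most 3 in q with coefficients depending on (x,y,p), such that for every four-times continuously differentiable function y(x) with graph in U and s(x) = φ_x + y'(x)·φ_y ≠ 0, the image function u of t (defined by u(φ(x,y(x))) = ψ(x,y(x))) satisfies at corresponding points: u' = (ψ_x + y'·ψ_y)/s; s³·u'' = Δ·y'' + S(x,y,y'); s⁵·u''' = Δ·s·y''' − 3Δ·φ_y·(y'')² + a(x,y,y')·y'' + b(x,y,y'); and s⁷·u'''' = Δ·s²·y'''' − 10Δ·φ_y·s·y''·y'''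 + c(x,y,y')·y''' + Q(x,y,y',y''). -/
/-!
Along the graph put `f t = φ t (y t)` and `g t = ψ t (y t)`, so that `g = u ∘ f`. By the chain
rule, `f^(k)` and `g^(k)` are polynomials in `y'', …, y^(k)` whose coefficients are partial
derivatives of `φ`, `ψ` at `(x, y, y')`; by Faà di Bruno, `g^(k)` is also a polynomial in
`u'(f), …, u^(k)(f)` and `f', …, f^(k)`. Multiplied by `s^(2k-1)`, where `s = f'`, this
triangular system expresses `s^(2k-1) u^(k)(f)` polynomially in the derivatives of `f` and `g`.
Comparing coefficients of the jet variables then exhibits the leading terms; the lower-order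
parts `S, a, b, c, Q` are read off by evaluating at special jet values.
-/

open Set

section OneVariable

variable {𝕜 : Type*} [NontriviallyNormedField 𝕜] {f g u G : 𝕜 → 𝕜} {I W : Set 𝕜} {t G' : 𝕜}

theorem ContDiffOn.hasDerivAt_iteratedDeriv {n k : ℕ} (hf : ContDiffOn 𝕜 n f I) (hI : IsOpen I)
    (hk : k < n) (ht : t ∈ I) :
    HasDerivAt (iteratedDeriv k f) (iteratedDeriv (k + 1) f t) t := by
  have hd : DifferentiableOn 𝕜 (iteratedDeriv k f) I :=
    (hf.differentiableOn_iteratedDerivWithin (by exact_mod_cast hk) hI.uniqueDiffOn).congr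
      (iteratedDerivWithin_of_isOpen hI).symm
  rw [iteratedDeriv_succ]
  exact (hd.differentiableAt (hI.mem_nhds ht)).hasDerivAt

theorem iteratedDeriv_succ_eq_of_eqOn {k : ℕ} (hI : IsOpen I) (ht : t ∈ I)
    (hfG : EqOn (iteratedDeriv k f) G I) (hG : HasDerivAt G G' t) :
    iteratedDeriv (k + 1) f t = G' := by
  rw [iteratedDeriv_succ]
  exact (hG.congr_of_eventuallyEq (Filter.eventuallyEq_of_mem (hI.mem_nhds ht) hfG)).deriv

theorem iteratedDeriv_comp_four (hI : IsOpen I) (hW : IsOpen W) (hf : ContDiffOn 𝕜 4 f I)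
    (hu : ContDiffOn 𝕜 4 u W) (hfW : MapsTo f I W) (hg : EqOn g (u ∘ f) I) (ht : t ∈ I) :
    deriv g t = deriv u (f t) * deriv f t ∧
    iteratedDeriv 2 g t = iteratedDeriv 2 u (f t) * deriv f t ^ 2
      + deriv u (f t) * iteratedDeriv 2 f t ∧
    iteratedDeriv 3 g t = iteratedDeriv 3 u (f t) * deriv f t ^ 3
      + 3 * iteratedDeriv 2 u (f t) * deriv f t * iteratedDeriv 2 f t
      + deriv u (f t) * iteratedDeriv 3 f t ∧
    iteratedDeriv 4 g t = iteratedDeriv 4 u (f t) * deriv f t ^ 4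
      + 6 * iteratedDeriv 3 u (f t) * deriv f t ^ 2 * iteratedDeriv 2 f t
      + iteratedDeriv 2 u (f t) * (3 * iteratedDeriv 2 f t ^ 2
        + 4 * deriv f t * iteratedDeriv 3 f t)
      + deriv u (f t) * iteratedDeriv 4 f t := by
  have df (k : ℕ) (hk : k < 4) {t} (ht : t ∈ I) := hf.hasDerivAt_iteratedDeriv hI hk ht
  have du (k : ℕ) (hk : k < 4) {t} (ht : t ∈ I) :
      HasDerivAt (fun t => iteratedDeriv k u (f t))
        (iteratedDeriv (k + 1) u (f t) * iteratedDeriv 1 f t) t :=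
    (hu.hasDerivAt_iteratedDeriv hW hk (hfW ht)).comp t (df 0 (by norm_num) ht)
  have d1 : EqOn (iteratedDeriv 1 g) (fun t => iteratedDeriv 1 u (f t) * iteratedDeriv 1 f t) I :=
    fun t ht => iteratedDeriv_succ_eq_of_eqOn hI ht (k := 0) hg (du 0 (by norm_num) ht)
  have d2 : EqOn (iteratedDeriv 2 g) (fun t => iteratedDeriv 2 u (f t) * iteratedDeriv 1 f t ^ 2
      + iteratedDeriv 1 u (f t) * iteratedDeriv 2 f t) I := fun t ht =>
    iteratedDeriv_succ_eq_of_eqOn hI ht d1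
      (((du 1 (by norm_num) ht).mul (df 1 (by norm_num) ht)).congr_deriv (by ring))
  have d3 : EqOn (iteratedDeriv 3 g) (fun t => iteratedDeriv 3 u (f t) * iteratedDeriv 1 f t ^ 3
      + 3 * iteratedDeriv 2 u (f t) * iteratedDeriv 1 f t * iteratedDeriv 2 f t
      + iteratedDeriv 1 u (f t) * iteratedDeriv 3 f t) I := fun t ht =>
    iteratedDeriv_succ_eq_of_eqOn hI ht d2
      ((((du 2 (by norm_num) ht).mul ((df 1 (by norm_num) ht).pow 2)).add
        ((du 1 (by norm_num) ht).mul (df 2 (by norm_num) ht))).congr_deriv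
          (by simp only [Pi.pow_apply]; ring))
  have d4 : iteratedDeriv 4 g t = iteratedDeriv 4 u (f t) * iteratedDeriv 1 f t ^ 4
      + 6 * iteratedDeriv 3 u (f t) * iteratedDeriv 1 f t ^ 2 * iteratedDeriv 2 f t
      + iteratedDeriv 2 u (f t) * (3 * iteratedDeriv 2 f t ^ 2
        + 4 * iteratedDeriv 1 f t * iteratedDeriv 3 f t)
      + iteratedDeriv 1 u (f t) * iteratedDeriv 4 f t :=
    iteratedDeriv_succ_eq_of_eqOn hI ht d3
      (((((du 3 (by norm_num) ht).mul ((df 1 (by norm_num) ht).pow 3)).add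
        ((((du 2 (by norm_num) ht).const_mul 3).mul (df 1 (by norm_num) ht)).mul
          (df 2 (by norm_num) ht))).add
        ((du 1 (by norm_num) ht).mul (df 3 (by norm_num) ht))).congr_deriv
          (by simp only [Pi.pow_apply, Pi.mul_apply]; ring))
  simp only [iteratedDeriv_one] at d1 d2 d3 d4
  exact ⟨d1 ht, d2 ht, d3 ht, d4⟩

end OneVariable

section PartialDerivatives

variable {F : ℝ → ℝ → ℝ} {U : Set (ℝ × ℝ)}

theorem px_eq_fderiv_s5 {z : ℝ × ℝ} (h : DifferentiableAt ℝ (fun p : ℝ × ℝ => F p.1 p.2) z) :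
    px F z.1 z.2 = fderiv ℝ (fun p : ℝ × ℝ => F p.1 p.2) z (1, 0) :=
  (h.hasFDerivAt.comp_hasDerivAt (f := fun s => ((s, z.2) : ℝ × ℝ)) z.1
    ((hasDerivAt_id z.1).prodMk (hasDerivAt_const _ _))).deriv

theorem py_eq_fderiv_s5 {z : ℝ × ℝ} (h : DifferentiableAt ℝ (fun p : ℝ × ℝ => F p.1 p.2) z) :
    py F z.1 z.2 = fderiv ℝ (fun p : ℝ × ℝ => F p.1 p.2) z (0, 1) :=
  (h.hasFDerivAt.comp_hasDerivAt (f := fun s => ((z.1, s) : ℝ × ℝ)) z.2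
    ((hasDerivAt_const _ _).prodMk (hasDerivAt_id z.2))).deriv

/-- `totalDerivk F x Y p …` is the `k`-th derivative of `t ↦ F t (y t)` at `x`, where
`(Y, p, q, r, w)` are the values of `y, y', y'', y''', y''''` at `x`. -/
noncomputable def totalDeriv1 (F : ℝ → ℝ → ℝ) (x Y p : ℝ) : ℝ := px F x Y + p * py F x Y

noncomputable def totalDeriv2 (F : ℝ → ℝ → ℝ) (x Y p q : ℝ) : ℝ :=
  totalDeriv1 (px F) x Y p + p * totalDeriv1 (py F) x Y p + q * py F x Y

noncomputable def totalDeriv3 (F : ℝ → ℝ → ℝ) (x Y p q r : ℝ) : ℝ :=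
  totalDeriv2 (px F) x Y p q + p * totalDeriv2 (py F) x Y p q
    + 2 * q * totalDeriv1 (py F) x Y p + r * py F x Y

noncomputable def totalDeriv4 (F : ℝ → ℝ → ℝ) (x Y p q r w : ℝ) : ℝ :=
  totalDeriv3 (px F) x Y p q r + p * totalDeriv3 (py F) x Y p q r
    + 3 * q * totalDeriv2 (py F) x Y p q + 3 * r * totalDeriv1 (py F) x Y p + w * py F x Y

namespace Smooth2On

theorem differentiableAt (hF : Smooth2On F U) (hU : IsOpen U) {z : ℝ × ℝ} (hz : z ∈ U) :
    DifferentiableAt ℝ (fun p : ℝ × ℝ => F p.1 p.2) z :=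
  (hF.contDiffAt (hU.mem_nhds hz)).differentiableAt (by simp)

theorem fderiv_apply (hF : Smooth2On F U) (hU : IsOpen U) (v : ℝ × ℝ) :
    Smooth2On (fun x y => fderiv ℝ (fun p : ℝ × ℝ => F p.1 p.2) (x, y) v) U :=
  (hF.fderiv_of_isOpen hU (by exact_mod_cast le_top)).clm_apply contDiffOn_const

protected theorem px (hF : Smooth2On F U) (hU : IsOpen U) : Smooth2On (px F) U :=
  (hF.fderiv_apply hU (1, 0)).congr fun _ hz => px_eq_fderiv_s5 (hF.differentiableAt hU hz)

protected theorem py (hF : Smooth2On F U) (hU : IsOpen U) : Smooth2On (py F) U :=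
  (hF.fderiv_apply hU (0, 1)).congr fun _ hz => py_eq_fderiv_s5 (hF.differentiableAt hU hz)

theorem contDiffOn_comp {n : ℕ} {I : Set ℝ} {y : ℝ → ℝ} (hF : Smooth2On F U)
    (hy : ContDiffOn ℝ n y I) (hyU : ∀ t ∈ I, (t, y t) ∈ U) :
    ContDiffOn ℝ n (fun t => F t (y t)) I :=
  (hF.of_le (by exact_mod_cast le_top)).comp (contDiffOn_id.prodMk hy) hyU

variable {y y₁ y₂ y₃ : ℝ → ℝ} {x q : ℝ}

theorem hasDerivAt_comp (hF : Smooth2On F U) (hU : IsOpen U) (hxU : (x, y x) ∈ U)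
    (hy : HasDerivAt y q x) :
    HasDerivAt (fun t => F t (y t)) (totalDeriv1 F x (y x) q) x := by
  have hd := hF.differentiableAt hU hxU
  refine (hd.hasFDerivAt.comp_hasDerivAt x ((hasDerivAt_id x).prodMk hy)).congr_deriv ?_
  rw [totalDeriv1, px_eq_fderiv_s5 hd, py_eq_fderiv_s5 hd, ← smul_eq_mul, ← map_smul, ← map_add]
  simp

theorem hasDerivAt_totalDeriv1 (hF : Smooth2On F U) (hU : IsOpen U) (hxU : (x, y x) ∈ U)
    (hy : HasDerivAt y (y₁ x) x) (hy₁ : HasDerivAt y₁ q x) :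
    HasDerivAt (fun t => totalDeriv1 F t (y t) (y₁ t)) (totalDeriv2 F x (y x) (y₁ x) q) x :=
  ((hF.px hU).hasDerivAt_comp hU hxU hy).add
    (hy₁.mul ((hF.py hU).hasDerivAt_comp hU hxU hy)) |>.congr_deriv (by
      simp only [totalDeriv2]; ring)

theorem hasDerivAt_totalDeriv2 (hF : Smooth2On F U) (hU : IsOpen U) (hxU : (x, y x) ∈ U)
    (hy : HasDerivAt y (y₁ x) x) (hy₁ : HasDerivAt y₁ (y₂ x) x) (hy₂ : HasDerivAt y₂ q x) :
    HasDerivAt (fun t => totalDeriv2 F t (y t) (y₁ t) (y₂ t))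
      (totalDeriv3 F x (y x) (y₁ x) (y₂ x) q) x :=
  (((hF.px hU).hasDerivAt_totalDeriv1 hU hxU hy hy₁).add
    (hy₁.mul ((hF.py hU).hasDerivAt_totalDeriv1 hU hxU hy hy₁))).add
    (hy₂.mul ((hF.py hU).hasDerivAt_comp hU hxU hy)) |>.congr_deriv (by
      simp only [totalDeriv3]; ring)

theorem hasDerivAt_totalDeriv3 (hF : Smooth2On F U) (hU : IsOpen U) (hxU : (x, y x) ∈ U)
    (hy : HasDerivAt y (y₁ x) x) (hy₁ : HasDerivAt y₁ (y₂ x) x) (hy₂ : HasDerivAt y₂ (y₃ x) x)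
    (hy₃ : HasDerivAt y₃ q x) :
    HasDerivAt (fun t => totalDeriv3 F t (y t) (y₁ t) (y₂ t) (y₃ t))
      (totalDeriv4 F x (y x) (y₁ x) (y₂ x) (y₃ x) q) x :=
  ((((hF.px hU).hasDerivAt_totalDeriv2 hU hxU hy hy₁ hy₂).add
    (hy₁.mul ((hF.py hU).hasDerivAt_totalDeriv2 hU hxU hy hy₁ hy₂))).add
    ((hy₂.const_mul 2).mul ((hF.py hU).hasDerivAt_totalDeriv1 hU hxU hy hy₁))).add
    (hy₃.mul ((hF.py hU).hasDerivAt_comp hU hxU hy)) |>.congr_deriv (by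
      simp only [totalDeriv4]; ring)

theorem iteratedDeriv_comp {I : Set ℝ} (hF : Smooth2On F U) (hU : IsOpen U) (hI : IsOpen I)
    (hy : ContDiffOn ℝ 4 y I) (hyU : ∀ t ∈ I, (t, y t) ∈ U) (hx : x ∈ I) :
    deriv (fun t => F t (y t)) x = totalDeriv1 F x (y x) (deriv y x) ∧
    iteratedDeriv 2 (fun t => F t (y t)) x
      = totalDeriv2 F x (y x) (deriv y x) (iteratedDeriv 2 y x) ∧
    iteratedDeriv 3 (fun t => F t (y t)) x
      = totalDeriv3 F x (y x) (deriv y x) (iteratedDeriv 2 y x) (iteratedDeriv 3 y x) ∧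
    iteratedDeriv 4 (fun t => F t (y t)) x
      = totalDeriv4 F x (y x) (deriv y x) (iteratedDeriv 2 y x) (iteratedDeriv 3 y x)
          (iteratedDeriv 4 y x) := by
  have dy (k : ℕ) (hk : k < 4) {t} (ht : t ∈ I) := hy.hasDerivAt_iteratedDeriv hI hk ht
  have dy₀ {t} (ht : t ∈ I) : HasDerivAt y (deriv y t) t := by simpa using dy 0 (by norm_num) ht
  have dy₁ {t} (ht : t ∈ I) : HasDerivAt (deriv y) (iteratedDeriv 2 y t) t := by
    simpa using dy 1 (by norm_num) ht
  have d1 : EqOn (iteratedDeriv 1 fun t => F t (y t))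
      (fun t => totalDeriv1 F t (y t) (deriv y t)) I := fun t ht =>
    iteratedDeriv_succ_eq_of_eqOn (k := 0) hI ht (by simp [EqOn])
      (hF.hasDerivAt_comp hU (hyU t ht) (dy₀ ht))
  have d2 : EqOn (iteratedDeriv 2 fun t => F t (y t))
      (fun t => totalDeriv2 F t (y t) (deriv y t) (iteratedDeriv 2 y t)) I := fun t ht =>
    iteratedDeriv_succ_eq_of_eqOn hI ht d1
      (hF.hasDerivAt_totalDeriv1 hU (hyU t ht) (dy₀ ht) (dy₁ ht))
  have d3 : EqOn (iteratedDeriv 3 fun t => F t (y t))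
      (fun t => totalDeriv3 F t (y t) (deriv y t) (iteratedDeriv 2 y t)
        (iteratedDeriv 3 y t)) I := fun t ht =>
    iteratedDeriv_succ_eq_of_eqOn hI ht d2
      (hF.hasDerivAt_totalDeriv2 hU (hyU t ht) (dy₀ ht) (dy₁ ht) (dy 2 (by norm_num) ht))
  refine ⟨by simpa using d1 hx, d2 hx, d3 hx, iteratedDeriv_succ_eq_of_eqOn hI hx d3
    (hF.hasDerivAt_totalDeriv3 hU (hyU x hx) (dy₀ hx) (dy₁ hx) (dy 2 (by norm_num) hx)
      (dy 3 (by norm_num) hx))⟩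

end Smooth2On

end PartialDerivatives

theorem pow_mul_eq_of_faaDiBruno {R : Type*} [CommRing R]
    {s f₂ f₃ f₄ g₁ g₂ g₃ g₄ v₁ v₂ v₃ v₄ : R} (h₁ : g₁ = v₁ * s)
    (h₂ : g₂ = v₂ * s ^ 2 + v₁ * f₂) (h₃ : g₃ = v₃ * s ^ 3 + 3 * v₂ * s * f₂ + v₁ * f₃)
    (h₄ : g₄ = v₄ * s ^ 4 + 6 * v₃ * s ^ 2 * f₂ + v₂ * (3 * f₂ ^ 2 + 4 * s * f₃) + v₁ * f₄) :
    s ^ 3 * v₂ = s * g₂ - g₁ * f₂ ∧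
    s ^ 5 * v₃ = s ^ 2 * g₃ - 3 * (s ^ 3 * v₂) * f₂ - s * g₁ * f₃ ∧
    s ^ 7 * v₄ = s ^ 3 * g₄ - 6 * (s ^ 5 * v₃) * f₂ - (3 * f₂ ^ 2 + 4 * s * f₃) * (s ^ 3 * v₂)
      - s ^ 2 * g₁ * f₄ :=
  ⟨by linear_combination f₂ * h₁ - s * h₂,
   by linear_combination s * f₃ * h₁ - s ^ 2 * h₃,
   by linear_combination s ^ 2 * f₄ * h₁ - s ^ 3 * h₄⟩

/-- Monomial coefficients of the cubic interpolating `P` at `-1, 0, 1, 2`. -/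
noncomputable def cubicInterpCoeff (P : ℝ → ℝ) : Fin 4 → ℝ :=
  ![P 0, (6 * P 1 - 3 * P 0 - 2 * P (-1) - P 2) / 6, (P 1 - 2 * P 0 + P (-1)) / 2,
    (P 2 - 3 * P 1 + 3 * P 0 - P (-1)) / 6]

section ImageDerivatives

variable (φ ψ : ℝ → ℝ → ℝ) (x Y p q r w : ℝ)

/-- With `s = totalDeriv1 φ`, these are `s³ u''`, `s⁵ u'''` and `s⁷ u''''` expressed through the
jet of `y` (cf. `pow_mul_eq_of_faaDiBruno`). -/
noncomputable def scaledImageDeriv2 : ℝ :=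
  totalDeriv1 φ x Y p * totalDeriv2 ψ x Y p q - totalDeriv1 ψ x Y p * totalDeriv2 φ x Y p q

noncomputable def scaledImageDeriv3 : ℝ :=
  totalDeriv1 φ x Y p ^ 2 * totalDeriv3 ψ x Y p q r
    - 3 * scaledImageDeriv2 φ ψ x Y p q * totalDeriv2 φ x Y p q
    - totalDeriv1 φ x Y p * totalDeriv1 ψ x Y p * totalDeriv3 φ x Y p q r

noncomputable def scaledImageDeriv4 : ℝ :=
  totalDeriv1 φ x Y p ^ 3 * totalDeriv4 ψ x Y p q r w
    - 6 * scaledImageDeriv3 φ ψ x Y p q r * totalDeriv2 φ x Y p q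
    - (3 * totalDeriv2 φ x Y p q ^ 2 + 4 * totalDeriv1 φ x Y p * totalDeriv3 φ x Y p q r)
      * scaledImageDeriv2 φ ψ x Y p q
    - totalDeriv1 φ x Y p ^ 2 * totalDeriv1 ψ x Y p * totalDeriv4 φ x Y p q r w

theorem scaledImageDeriv2_eq :
    scaledImageDeriv2 φ ψ x Y p q = Jac φ ψ x Y * q + scaledImageDeriv2 φ ψ x Y p 0 := by
  simp only [scaledImageDeriv2, totalDeriv2, totalDeriv1, Jac]
  ring

theorem scaledImageDeriv3_eq :
    scaledImageDeriv3 φ ψ x Y p q r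
      = Jac φ ψ x Y * totalDeriv1 φ x Y p * r - 3 * Jac φ ψ x Y * py φ x Y * q ^ 2
        + (scaledImageDeriv3 φ ψ x Y p 1 0 - scaledImageDeriv3 φ ψ x Y p 0 0
          + 3 * Jac φ ψ x Y * py φ x Y) * q
        + scaledImageDeriv3 φ ψ x Y p 0 0 := by
  simp only [scaledImageDeriv3, scaledImageDeriv2, totalDeriv3, totalDeriv2, totalDeriv1, Jac]
  ring

theorem scaledImageDeriv4_eq :
    scaledImageDeriv4 φ ψ x Y p q r w
      = Jac φ ψ x Y * totalDeriv1 φ x Y p ^ 2 * w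
        - 10 * Jac φ ψ x Y * py φ x Y * totalDeriv1 φ x Y p * q * r
        + (scaledImageDeriv4 φ ψ x Y p 0 1 0 - scaledImageDeriv4 φ ψ x Y p 0 0 0) * r
        + scaledImageDeriv4 φ ψ x Y p q 0 0 := by
  simp only [scaledImageDeriv4, scaledImageDeriv3, scaledImageDeriv2, totalDeriv4, totalDeriv3,
    totalDeriv2, totalDeriv1, Jac]
  ring

theorem scaledImageDeriv4_eq_cubic :
    let c := cubicInterpCoeff fun q => scaledImageDeriv4 φ ψ x Y p q 0 0
    scaledImageDeriv4 φ ψ x Y p q 0 0 = c 3 * q ^ 3 + c 2 * q ^ 2 + c 1 * q + c 0 := by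
  simp only [cubicInterpCoeff, scaledImageDeriv4, scaledImageDeriv3, scaledImageDeriv2,
    totalDeriv4, totalDeriv3, totalDeriv2, totalDeriv1, Matrix.cons_val]
  ring

end ImageDerivatives

/-- the transformation formulas for the first four derivatives under a
point transformation `t = φ(x,y)`, `u = ψ(x,y)`:
`u' = (ψ_x + y'ψ_y)/s`, `s³u'' = Δy'' + S`, `s⁵u''' = Δs y''' − 3Δφ_y (y'')² + a y'' + b`,
`s⁷u'''' = Δs² y'''' − 10Δφ_y s y'' y''' + c y''' + Q`, with `Q` cubic in `y''`. -/
theorem derivative_transformation_formulas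
    (U : Set (ℝ × ℝ)) (hU : IsOpen U)
    (φ ψ : ℝ → ℝ → ℝ) (hφ : Smooth2On φ U) (hψ : Smooth2On ψ U) :
    ∃ (S a b c : ℝ → ℝ → ℝ → ℝ) (Q : ℝ → ℝ → ℝ → ℝ → ℝ),
      (∃ q0 q1 q2 q3 : ℝ → ℝ → ℝ → ℝ, ∀ x y p q,
        Q x y p q = q3 x y p * q ^ 3 + q2 x y p * q ^ 2 + q1 x y p * q + q0 x y p) ∧
      ∀ (y : ℝ → ℝ) (I : Set ℝ), IsOpen I → I.OrdConnected →
        (∀ x ∈ I, (x, y x) ∈ U) → ContDiffOn ℝ 4 y I →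
        (∀ x ∈ I, px φ x (y x) + deriv y x * py φ x (y x) ≠ 0) →
        ∀ (u : ℝ → ℝ) (W : Set ℝ), IsOpen W → (∀ x ∈ I, φ x (y x) ∈ W) →
          ContDiffOn ℝ 4 u W →
          (∀ x ∈ I, u (φ x (y x)) = ψ x (y x)) →
          ∀ x ∈ I,
            deriv u (φ x (y x))
              = (px ψ x (y x) + deriv y x * py ψ x (y x))
                / (px φ x (y x) + deriv y x * py φ x (y x)) ∧
            (px φ x (y x) + deriv y x * py φ x (y x)) ^ 3
                * iteratedDeriv 2 u (φ x (y x))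
              = Jac φ ψ x (y x) * iteratedDeriv 2 y x + S x (y x) (deriv y x) ∧
            (px φ x (y x) + deriv y x * py φ x (y x)) ^ 5
                * iteratedDeriv 3 u (φ x (y x))
              = Jac φ ψ x (y x) * (px φ x (y x) + deriv y x * py φ x (y x))
                  * iteratedDeriv 3 y x
                - 3 * Jac φ ψ x (y x) * py φ x (y x) * (iteratedDeriv 2 y x) ^ 2
                + a x (y x) (deriv y x) * iteratedDeriv 2 y x
                + b x (y x) (deriv y x) ∧
            (px φ x (y x) + deriv y x * py φ x (y x)) ^ 7
                * iteratedDeriv 4 u (φ x (y x))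
              = Jac φ ψ x (y x) * (px φ x (y x) + deriv y x * py φ x (y x)) ^ 2
                  * iteratedDeriv 4 y x
                - 10 * Jac φ ψ x (y x) * py φ x (y x)
                  * (px φ x (y x) + deriv y x * py φ x (y x))
                  * iteratedDeriv 2 y x * iteratedDeriv 3 y x
                + c x (y x) (deriv y x) * iteratedDeriv 3 y x
                + Q x (y x) (deriv y x) (iteratedDeriv 2 y x) := by
  let M3 := scaledImageDeriv3 φ ψ
  let M4 := scaledImageDeriv4 φ ψ
  let coeff x Y p := cubicInterpCoeff fun q => M4 x Y p q 0 0
  refine ⟨fun x Y p => scaledImageDeriv2 φ ψ x Y p 0,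
    fun x Y p => M3 x Y p 1 0 - M3 x Y p 0 0 + 3 * Jac φ ψ x Y * py φ x Y,
    fun x Y p => M3 x Y p 0 0, fun x Y p => M4 x Y p 0 1 0 - M4 x Y p 0 0 0,
    fun x Y p q => M4 x Y p q 0 0,
    ⟨fun x Y p => coeff x Y p 0, fun x Y p => coeff x Y p 1, fun x Y p => coeff x Y p 2,
      fun x Y p => coeff x Y p 3, fun x Y p q => scaledImageDeriv4_eq_cubic φ ψ x Y p q⟩, ?_⟩
  intro y I hI _ hyU hy hs u W hW hφW hu hψu x hx
  obtain ⟨f₁, f₂, f₃, f₄⟩ := hφ.iteratedDeriv_comp hU hI hy hyU hx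
  obtain ⟨g₁, g₂, g₃, g₄⟩ := hψ.iteratedDeriv_comp hU hI hy hyU hx
  obtain ⟨h₁, h₂, h₃, h₄⟩ := iteratedDeriv_comp_four hI hW (hφ.contDiffOn_comp hy hyU) hu hφW
    (fun t ht => (hψu t ht).symm) hx
  simp only [f₁, f₂, f₃, f₄, g₁, g₂, g₃, g₄] at h₁ h₂ h₃ h₄
  obtain ⟨e₂, e₃, e₄⟩ := pow_mul_eq_of_faaDiBruno h₁ h₂ h₃ h₄
  rw [e₂] at e₃
  rw [e₂, e₃] at e₄
  exact ⟨eq_div_of_mul_eq (hs x hx) h₁.symm, e₂.trans (scaledImageDeriv2_eq ..),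
    e₃.trans (scaledImageDeriv3_eq ..), e₄.trans (scaledImageDeriv4_eq ..)⟩
end

section
/- Let φ, ψ be smooth on an open set U ⊆ ℝ² with φ_y ≠ 0 and nonvanishing Jacobian Δ = φ_x·ψ_y − φ_y·ψ_x, and define r = φ_x/φ_y, F2 = −2(5φ_yy·Δ − 2φ_y·Δ_y)/(φ_y·Δ), F1 = 4[(Δ_x + Δ_y·r − 5r_y·Δ)·φ_y − 5φ_yy·r·Δ]/(φ_y·Δ), F0 = −2[((5r_y·Δ − 2Δ_x)·r + 5r_x·Δ)·φ_y + 5φ_yy·r²·Δ]/(φ_y·Δ), H2 = 6(5φ_yy·Δ − 2φ_y·Δ_y)/(φ_y·Δ), H1 = −3[(5Δ_x + 3Δ_y·r − 25r_y·Δ)·φ_y − 20φ_yy·r·Δ]/(φ_y·Δ), H0 = 3[(5(3r_x + 2r_y·r)·Δ − (5Δ_x − Δ_y·r)·r)·φ_y + 10φ_yy·r²·Δ]/(φ_y·Δ). Then the identities H2 = −3F2, 4H1 = −3(5F1 − 2F2·r), and 4H0 = −3(6F0 − F1·r) hold on U. -/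
open Set

/-- for the coefficients defined from a point transformation with
`φ_y ≠ 0` and `Δ ≠ 0`, the identities `H2 = −3F2`, `4H1 = −3(5F1 − 2F2·r)` and
`4H0 = −3(6F0 − F1·r)` hold on `U`. -/
theorem conditions_67_68_69_identities
    (U : Set (ℝ × ℝ)) (hU : IsOpen U)
    (φ ψ : ℝ → ℝ → ℝ) (hφ : Smooth2On φ U) (hψ : Smooth2On ψ U)
    (hφy : ∀ x y, (x, y) ∈ U → py φ x y ≠ 0)
    (hΔ : ∀ x y, (x, y) ∈ U → Jac φ ψ x y ≠ 0)
    (r F0 F1 F2 H0 H1 H2 : ℝ → ℝ → ℝ)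
    (hr : ∀ x y, (x, y) ∈ U → r x y = px φ x y / py φ x y)
    (hF2 : ∀ x y, (x, y) ∈ U → F2 x y
      = -2 * (5 * py (py φ) x y * Jac φ ψ x y - 2 * py φ x y * py (Jac φ ψ) x y)
        / (py φ x y * Jac φ ψ x y))
    (hF1 : ∀ x y, (x, y) ∈ U → F1 x y
      = 4 * ((px (Jac φ ψ) x y + py (Jac φ ψ) x y * r x y
            - 5 * py r x y * Jac φ ψ x y) * py φ x y
          - 5 * py (py φ) x y * r x y * Jac φ ψ x y)
        / (py φ x y * Jac φ ψ x y))
    (hF0 : ∀ x y, (x, y) ∈ U → F0 x y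
      = -2 * (((5 * py r x y * Jac φ ψ x y - 2 * px (Jac φ ψ) x y) * r x y
            + 5 * px r x y * Jac φ ψ x y) * py φ x y
          + 5 * py (py φ) x y * r x y ^ 2 * Jac φ ψ x y)
        / (py φ x y * Jac φ ψ x y))
    (hH2 : ∀ x y, (x, y) ∈ U → H2 x y
      = 6 * (5 * py (py φ) x y * Jac φ ψ x y - 2 * py φ x y * py (Jac φ ψ) x y)
        / (py φ x y * Jac φ ψ x y))
    (hH1 : ∀ x y, (x, y) ∈ U → H1 x y
      = -3 * ((5 * px (Jac φ ψ) x y + 3 * py (Jac φ ψ) x y * r x y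
            - 25 * py r x y * Jac φ ψ x y) * py φ x y
          - 20 * py (py φ) x y * r x y * Jac φ ψ x y)
        / (py φ x y * Jac φ ψ x y))
    (hH0 : ∀ x y, (x, y) ∈ U → H0 x y
      = 3 * ((5 * (3 * px r x y + 2 * py r x y * r x y) * Jac φ ψ x y
            - (5 * px (Jac φ ψ) x y - py (Jac φ ψ) x y * r x y) * r x y) * py φ x y
          + 10 * py (py φ) x y * r x y ^ 2 * Jac φ ψ x y)
        / (py φ x y * Jac φ ψ x y)) :
    ∀ x y, (x, y) ∈ U →
      H2 x y = -3 * F2 x y ∧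
      4 * H1 x y = -3 * (5 * F1 x y - 2 * F2 x y * r x y) ∧
      4 * H0 x y = -3 * (6 * F0 x y - F1 x y * r x y) := by
  intro x y h
  have hp := hφy x y h
  have hj := hΔ x y h
  rw [hF2 x y h, hF1 x y h, hF0 x y h, hH2 x y h, hH1 x y h, hH0 x y h]
  refine ⟨?_, ?_, ?_⟩ <;> field_simp <;> ring
end
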